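/- arXiv:2311.03977 — 4 statements merged into one kernel-verified Lean document; each statement's English description precedes it below -/
import Mathlib

section
/- Let M ∈ ℝ^{n×n} be skew-symmetric, q ∈ ℝⁿ, and define F(z) = z ⊙ (Mz + q) (Hadamard product). Then the Jacobian of F at z equals Z M + S, where Z = diag(z) and S = diag(Mz + q), and this Jacobian is nonsingular whenever z > 0 and Mz + q > 0 (componentwise). -/
/-!
The derivative is the product rule for the Hadamard product. For nonsingularity, factor
`Z M + S = Z (M + Z⁻¹ S)`: since `M` is skew, `xᵀ (M + D) x = ∑ dᵢ xᵢ²` for the positive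
diagonal `D = Z⁻¹ S`, which is positive for `x ≠ 0`, so `M + D` has trivial kernel.
-/

open Matrix

theorem hasFDerivAt_mul_mulVec_add {𝕜 ι : Type*} [NontriviallyNormedField 𝕜] [CompleteSpace 𝕜]
    [Fintype ι] [DecidableEq ι] (A : Matrix ι ι 𝕜) (q z : ι → 𝕜) :
    HasFDerivAt (fun w : ι → 𝕜 => w * (A *ᵥ w + q))
      ((diagonal z * A + diagonal (A *ᵥ z + q)).mulVecLin.toContinuousLinearMap) z := by
  have hA : HasFDerivAt (fun w : ι → 𝕜 => A *ᵥ w + q) A.mulVecLin.toContinuousLinearMap z :=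
    A.mulVecLin.toContinuousLinearMap.hasFDerivAt.add_const q
  refine ((hasFDerivAt_id z).mul hA).congr_fderiv ?_
  ext v i
  simp [-mulVec_mulVec, mulVec_diagonal, mul_comm]

namespace Matrix

variable {ι : Type*} [Fintype ι]

theorem dotProduct_mulVec_self_eq_zero {R : Type*} [CommRing R] [IsAddTorsionFree R]
    {M : Matrix ι ι R} (hM : Mᵀ = -M) (x : ι → R) : x ⬝ᵥ (M *ᵥ x) = 0 := by
  refine self_eq_neg.mp ?_
  conv_lhs => rw [dotProduct_mulVec, ← mulVec_transpose, hM]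
  rw [neg_mulVec, neg_dotProduct, dotProduct_comm]

theorem isUnit_of_dotProduct_mulVec_pos {K : Type*} [Field K] [Preorder K] [DecidableEq ι]
    {A : Matrix ι ι K} (hA : ∀ x ≠ 0, 0 < x ⬝ᵥ (A *ᵥ x)) : IsUnit A := by
  rw [isUnit_iff_isUnit_det, isUnit_iff_ne_zero, Ne, ← exists_mulVec_eq_zero_iff]
  rintro ⟨x, hx, hAx⟩
  simpa [hAx] using hA x hx

variable {K : Type*} [Field K] [LinearOrder K] [IsStrictOrderedRing K] [DecidableEq ι]

theorem dotProduct_diagonal_mulVec_self_pos {d : ι → K} (hd : ∀ i, 0 < d i)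
    {x : ι → K} (hx : x ≠ 0) : 0 < x ⬝ᵥ (diagonal d *ᵥ x) := by
  obtain ⟨j, hj⟩ := Function.ne_iff.mp hx
  have hsum : x ⬝ᵥ (diagonal d *ᵥ x) = ∑ i, d i * x i ^ 2 :=
    Finset.sum_congr rfl fun i _ => by rw [mulVec_diagonal]; ring
  rw [hsum]
  exact Finset.sum_pos' (fun i _ => mul_nonneg (hd i).le (sq_nonneg _))
    ⟨j, Finset.mem_univ j, mul_pos (hd j) (sq_pos_of_ne_zero hj)⟩

theorem isUnit_add_diagonal_of_transpose_eq_neg {M : Matrix ι ι K} (hM : Mᵀ = -M)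
    {d : ι → K} (hd : ∀ i, 0 < d i) : IsUnit (M + diagonal d) :=
  isUnit_of_dotProduct_mulVec_pos fun x hx => by
    rw [add_mulVec, dotProduct_add, dotProduct_mulVec_self_eq_zero hM, zero_add]
    exact dotProduct_diagonal_mulVec_self_pos hd hx

theorem isUnit_diagonal_mul_add_diagonal_of_transpose_eq_neg {M : Matrix ι ι K} (hM : Mᵀ = -M)
    {z s : ι → K} (hz : ∀ i, 0 < z i) (hs : ∀ i, 0 < s i) :
    IsUnit (diagonal z * M + diagonal s) := by
  have hfactor : diagonal z * M + diagonal s = diagonal z * (M + diagonal (s / z)) := by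
    rw [mul_add, diagonal_mul_diagonal]
    congr
    ext i
    exact (mul_div_cancel₀ (s i) (hz i).ne').symm
  rw [hfactor]
  exact (isUnit_diagonal.mpr (Pi.isUnit_iff.mpr fun i => (hz i).ne'.isUnit)).mul
    (isUnit_add_diagonal_of_transpose_eq_neg hM fun i => div_pos (hs i) (hz i))

end Matrix

theorem jacobian_of_complementarity_map {n : ℕ} (M : Matrix (Fin n) (Fin n) ℝ)
    (hM : Mᵀ = -M) (q z : Fin n → ℝ)
    (hz : ∀ i, 0 < z i) (hs : ∀ i, 0 < (M *ᵥ z + q) i) :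
    HasFDerivAt (fun w : Fin n → ℝ => w * (M *ᵥ w + q))
      ((Matrix.diagonal z * M + Matrix.diagonal (M *ᵥ z + q)).mulVecLin.toContinuousLinearMap) z
    ∧ IsUnit (Matrix.diagonal z * M + Matrix.diagonal (M *ᵥ z + q)) :=
  ⟨hasFDerivAt_mul_mulVec_add M q z,
    isUnit_diagonal_mul_add_diagonal_of_transpose_eq_neg hM hz hs⟩
end

section
/- Let M be skew-symmetric, and let Z, S be positive diagonal matrices with ZS = μI for some μ > 0. Then (ZM + S)ᵀ(ZM + S) = Mᵀ Z² M + S², and in particular (ZM+S)ᵀ(ZM+S) is positive definite. -/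
open Matrix

theorem gram_of_ZM_add_S {n : ℕ} (M : Matrix (Fin n) (Fin n) ℝ) (hM : Mᵀ = -M)
    (z s : Fin n → ℝ) (hz : ∀ i, 0 < z i) (hs : ∀ i, 0 < s i) (μ : ℝ) (hμ : 0 < μ)
    (hzs : Matrix.diagonal z * Matrix.diagonal s = μ • (1 : Matrix (Fin n) (Fin n) ℝ)) :
    (Matrix.diagonal z * M + Matrix.diagonal s)ᵀ * (Matrix.diagonal z * M + Matrix.diagonal s)
      = Mᵀ * (Matrix.diagonal z) ^ 2 * M + (Matrix.diagonal s) ^ 2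
    ∧ ((Matrix.diagonal z * M + Matrix.diagonal s)ᵀ *
        (Matrix.diagonal z * M + Matrix.diagonal s)).PosDef := by
  have hcomm : Matrix.diagonal s * Matrix.diagonal z = Matrix.diagonal z * Matrix.diagonal s := by
    rw [diagonal_mul_diagonal, diagonal_mul_diagonal]
    simp [mul_comm]
  have hcross : Mᵀ * Matrix.diagonal z * Matrix.diagonal s
      + Matrix.diagonal s * (Matrix.diagonal z * M) = 0 := by
    rw [mul_assoc Mᵀ, hzs, ← mul_assoc (Matrix.diagonal s), hcomm, hzs, hM]
    simp [Matrix.smul_mul, Matrix.mul_smul]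
  have heq : (Matrix.diagonal z * M + Matrix.diagonal s)ᵀ
      * (Matrix.diagonal z * M + Matrix.diagonal s)
      = Mᵀ * (Matrix.diagonal z) ^ 2 * M + (Matrix.diagonal s) ^ 2 := by
    rw [transpose_add, transpose_mul, diagonal_transpose, diagonal_transpose]
    rw [add_mul, mul_add, mul_add]
    have h1 : Mᵀ * Matrix.diagonal z * (Matrix.diagonal z * M)
        = Mᵀ * (Matrix.diagonal z) ^ 2 * M := by
      rw [sq, ← mul_assoc, mul_assoc Mᵀ]
    have h2 : Matrix.diagonal s * Matrix.diagonal s = (Matrix.diagonal s) ^ 2 := (sq _).symm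
    rw [h1, h2]
    rw [add_assoc, ← add_assoc (Mᵀ * Matrix.diagonal z * Matrix.diagonal s), hcross, zero_add]
  refine ⟨heq, heq ▸ ?_⟩
  have hsd : ((Matrix.diagonal s) ^ 2).PosDef := by
    rw [sq, diagonal_mul_diagonal]
    exact Matrix.PosDef.diagonal fun i => mul_pos (hs i) (hs i)
  have hsemi : (Mᵀ * (Matrix.diagonal z) ^ 2 * M).PosSemidef := by
    have : Mᵀ * (Matrix.diagonal z) ^ 2 * M
        = (Matrix.diagonal z * M)ᴴ * (Matrix.diagonal z * M) := by
      rw [conjTranspose_eq_transpose_of_trivial, transpose_mul, diagonal_transpose, sq,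
        ← mul_assoc]
      noncomm_ring
    rw [this]
    exact posSemidef_conjTranspose_mul_self _
  exact Matrix.PosDef.posSemidef_add hsemi hsd
end

section
/- Let M be skew-symmetric and Z, S positive diagonal matrices with ZS = μI for μ > 0. If every diagonal entry of Z is at most R, then every diagonal entry of S is at least μ/R, and the smallest singular value of ZM + S is at least μ/R. -/
open Matrix

theorem smallest_singular_value_bound {n : ℕ} (M : Matrix (Fin n) (Fin n) ℝ) (hM : Mᵀ = -M)
    (z s : Fin n → ℝ) (hz : ∀ i, 0 < z i) (hs : ∀ i, 0 < s i) (μ R : ℝ) (hμ : 0 < μ)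
    (hzs : ∀ i, z i * s i = μ) (hR : ∀ i, z i ≤ R) :
    (∀ i, μ / R ≤ s i) ∧
    (∀ x : Fin n → ℝ,
      (μ / R) ^ 2 * (x ⬝ᵥ x) ≤
        ((Matrix.diagonal z * M + Matrix.diagonal s) *ᵥ x) ⬝ᵥ
          ((Matrix.diagonal z * M + Matrix.diagonal s) *ᵥ x)) := by
  have hsge : ∀ i, μ / R ≤ s i := by
    intro i
    have hR0 : 0 < R := lt_of_lt_of_le (hz i) (hR i)
    rw [div_le_iff₀ hR0]
    calc μ = z i * s i := (hzs i).symm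
      _ ≤ R * s i := mul_le_mul_of_nonneg_right (hR i) (hs i).le
      _ = s i * R := mul_comm _ _
  refine ⟨hsge, ?_⟩
  intro x
  rcases Nat.eq_zero_or_pos n with h0 | hpos
  · subst h0
    simp [dotProduct]
  have hR0 : 0 < R := lt_of_lt_of_le (hz ⟨0, hpos⟩) (hR ⟨0, hpos⟩)
  set y := (Matrix.diagonal z * M + Matrix.diagonal s) *ᵥ x with hy
  -- skew symmetry gives xᵀ M x = 0
  have hskew : x ⬝ᵥ (M *ᵥ x) = 0 := by
    have h1 : x ⬝ᵥ (M *ᵥ x) = (Mᵀ *ᵥ x) ⬝ᵥ x := by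
      rw [dotProduct_mulVec, mulVec_transpose]
    rw [hM, neg_mulVec, neg_dotProduct] at h1
    have h2 : (M *ᵥ x) ⬝ᵥ x = x ⬝ᵥ (M *ᵥ x) := dotProduct_comm _ _
    linarith
  -- entrywise form of y
  have hyi : ∀ i, y i = z i * (M *ᵥ x) i + s i * x i := by
    intro i
    rw [hy, add_mulVec, ← mulVec_mulVec]
    simp only [Pi.add_apply, mulVec_diagonal]
  set a : ℝ := ∑ i, (s i * x i) ^ 2 with ha
  have hSy : ∑ i, (s i * x i) * y i = a := by
    have : ∑ i, (s i * x i) * y i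
        = μ * (x ⬝ᵥ (M *ᵥ x)) + ∑ i, (s i * x i) ^ 2 := by
      rw [dotProduct, Finset.mul_sum, ← Finset.sum_add_distrib]
      refine Finset.sum_congr rfl fun i _ => ?_
      rw [hyi i]
      have : s i * z i = μ := by rw [mul_comm]; exact hzs i
      linear_combination (x i * (M *ᵥ x) i) * this
    rw [this, hskew]
    simp [ha]
  have hCS : (∑ i, (s i * x i) * y i) ^ 2 ≤ a * ∑ i, y i ^ 2 :=
    Finset.sum_mul_sq_le_sq_mul_sq _ _ _
  rw [hSy] at hCS
  have ha0 : 0 ≤ a := Finset.sum_nonneg fun i _ => sq_nonneg _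
  have hyy : ∑ i, y i ^ 2 = y ⬝ᵥ y := by
    simp [dotProduct, sq]
  have hstep1 : (μ / R) ^ 2 * (x ⬝ᵥ x) ≤ a := by
    rw [dotProduct, Finset.mul_sum, ha]
    refine Finset.sum_le_sum fun i _ => ?_
    have h1 : μ / R ≤ s i := hsge i
    have h2 : 0 ≤ μ / R := div_nonneg hμ.le hR0.le
    have h3 : (μ / R) ^ 2 ≤ (s i) ^ 2 := pow_le_pow_left₀ h2 h1 2
    nlinarith [mul_nonneg (sub_nonneg.mpr h3) (sq_nonneg (x i))]
  rcases eq_or_lt_of_le ha0 with haz | hap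
  · have hx0 : ∀ i, x i = 0 := by
      intro i
      have := Finset.sum_eq_zero_iff_of_nonneg (fun i _ => sq_nonneg ((s i * x i))) |>.mp haz.symm i (Finset.mem_univ i)
      have h4 : s i * x i = 0 := by
        have := pow_eq_zero_iff (n := 2) (by norm_num) |>.mp this
        exact this
      rcases mul_eq_zero.mp h4 with h | h
      · exact absurd h (hs i).ne'
      · exact h
    have : x ⬝ᵥ x = 0 := by simp [dotProduct, hx0]
    rw [this, mul_zero]
    rw [← hyy]
    exact Finset.sum_nonneg fun i _ => sq_nonneg _
  · have : a ≤ ∑ i, y i ^ 2 := by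
      nlinarith
    rw [← hyy]
    linarith
end

section
/- Let the quadratic system z ⊙ (Mz + q) = μe with z ≥ 0 and Mz + q ≥ 0, where M is skew-symmetric and the interior point condition holds (there exists z⁰ > 0 with Mz⁰ + q > 0). If z and z' are two solutions for the same μ > 0, then z = z'. (Uniqueness of the μ-center under the identity zᵀ(Mz+q) = qᵀz.) -/
open Matrix

theorem mu_center_unique {N : ℕ}
    (M : Matrix (Fin N) (Fin N) ℝ) (hM : Mᵀ = -M) (q : Fin N → ℝ)
    (hIPC : ∃ z₀ : Fin N → ℝ, (∀ i, 0 < z₀ i) ∧ ∀ i, 0 < (M *ᵥ z₀ + q) i)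
    (μ : ℝ) (hμ : 0 < μ) (z z' : Fin N → ℝ)
    (hz : ∀ i, 0 < z i) (hsz : ∀ i, 0 < (M *ᵥ z + q) i)
    (hz' : ∀ i, 0 < z' i) (hsz' : ∀ i, 0 < (M *ᵥ z' + q) i)
    (hc : ∀ i, z i * (M *ᵥ z + q) i = μ)
    (hc' : ∀ i, z' i * (M *ᵥ z' + q) i = μ) :
    z = z' := by
  set s : Fin N → ℝ := fun i => (M *ᵥ z + q) i with hs
  set s' : Fin N → ℝ := fun i => (M *ᵥ z' + q) i with hs'
  -- the key quadratic form vanishes by skew-symmetry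
  have hskew : ∀ u : Fin N → ℝ, u ⬝ᵥ (M *ᵥ u) = 0 := by
    intro u
    have h1 : u ⬝ᵥ (M *ᵥ u) = (Mᵀ *ᵥ u) ⬝ᵥ u := by
      rw [Matrix.dotProduct_mulVec, ← Matrix.transpose_transpose M,
        Matrix.vecMul_transpose, Matrix.transpose_transpose]
    rw [hM, Matrix.neg_mulVec, neg_dotProduct] at h1
    have h2 : (M *ᵥ u) ⬝ᵥ u = u ⬝ᵥ (M *ᵥ u) := dotProduct_comm _ _
    linarith
  have hsum : ∑ i, (z i - z' i) * (s i - s' i) = 0 := by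
    have : ∀ i, (z i - z' i) * (s i - s' i) = (z - z') i * (M *ᵥ (z - z')) i := by
      intro i
      simp only [hs, hs', Matrix.mulVec_sub, Pi.sub_apply, Pi.add_apply]
      ring
    rw [Finset.sum_congr rfl (fun i _ => this i)]
    exact hskew (z - z')
  have hnonpos : ∀ i, (z i - z' i) * (s i - s' i) ≤ 0 := by
    intro i
    have h1 := hc i
    have h2 := hc' i
    have ha : 0 < z i * s' i := mul_pos (hz i) (hsz' i)
    have hb : 0 < z' i * s i := mul_pos (hz' i) (hsz i)
    nlinarith [sq_nonneg (z i * s' i - z' i * s i), sq_nonneg (z i * s' i + z' i * s i - 2*μ)]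
  have heach : ∀ i ∈ Finset.univ, (z i - z' i) * (s i - s' i) = 0 :=
    Finset.sum_eq_zero_iff_of_nonpos (fun i _ => hnonpos i) |>.mp hsum
  funext i
  have h0 := heach i (Finset.mem_univ i)
  have h1 : z i * s i = μ := hc i
  have h2 : z' i * s' i = μ := hc' i
  have hsum2 : z i * s' i + z' i * s i = 2*μ := by nlinarith [h0, h1, h2]
  have hprod : (z i * s' i) * (z' i * s i) = μ^2 := by
    have : (z i * s' i) * (z' i * s i) = (z i * s i) * (z' i * s' i) := by ring
    rw [this, h1, h2]; ring
  have hdiff : (z i * s' i - z' i * s i)^2 = 0 := by nlinarith [hsum2, hprod]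
  have heq : z i * s' i = z' i * s i := by
    have := sq_eq_zero_iff.mp hdiff
    linarith
  have haμ : z i * s' i = μ := by linarith
  have : z i * s' i = z' i * s' i := by rw [haμ, h2]
  exact mul_right_cancel₀ (ne_of_gt (hsz' i)) this
end
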